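/- arXiv:2002.09002 — 3 statements merged into one kernel-verified Lean document; each statement's English description precedes it below -/
import Mathlib

section
/- Let Mc91 : ℤ → ℤ → Prop be the least predicate closed under the rules: (a) if n > 100 then Mc91(n, n-10); (b) if n ≤ 100, Mc91(n+11, r') and Mc91(r', r) then Mc91(n, r). Then Mc91(n, r) implies r = 91 ∨ (n > 100 ∧ r = n - 10). -/
inductive Mc91 : ℤ → ℤ → Prop
  | base {n : ℤ} : n > 100 → Mc91 n (n - 10)
  | call {n r r' : ℤ} : n ≤ 100 → Mc91 (n + 11) r' → Mc91 r' r → Mc91 n r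

theorem mc91_sound {n r : ℤ} (h : Mc91 n r) :
    r = 91 ∨ (n > 100 ∧ r = n - 10) := by
  induction h with
  | base h => right; exact ⟨h, rfl⟩
  | call hle h1 h2 ih1 ih2 => left; omega
end

section
/- Let Mc91 : ℤ → ℤ → Prop be the inductively defined predicate with constructors: (a) n > 100 → Mc91(n, n-10); (b) n ≤ 100 → Mc91(n+11, r') → Mc91(r', r) → Mc91(n, r). Then for every n ≤ 101, Mc91(n, 91) holds. -/
lemma mc91_aux : ∀ k : ℕ, ∀ n : ℤ, (101 - n).toNat = k → n ≤ 101 → Mc91 n 91 := by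
  intro k
  induction k using Nat.strong_induction_on with
  | _ k ih =>
    intro n hk hn
    rcases eq_or_lt_of_le hn with h101 | h
    · have : Mc91 n (n - 10) := Mc91.base (by omega)
      have hrw : n - 10 = 91 := by omega
      rwa [hrw] at this
    · have hle : n ≤ 100 := by omega
      by_cases h90 : 90 ≤ n
      · have hb : Mc91 (n + 11) (n + 11 - 10) := Mc91.base (by omega)
        have h2 : Mc91 (n + 11 - 10) 91 := by
          have : Mc91 (n + 1) 91 := ih (101 - (n + 1)).toNat (by omega) (n + 1) rfl (by omega)
          have hrw : n + 11 - 10 = n + 1 := by omega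
          rwa [hrw]
        exact Mc91.call hle hb h2
      · have h1 : Mc91 (n + 11) 91 := ih (101 - (n + 11)).toNat (by omega) (n + 11) rfl (by omega)
        have h2 : Mc91 (91 : ℤ) 91 := ih (101 - (91 : ℤ)).toNat (by omega) 91 rfl (by omega)
        exact Mc91.call hle h1 h2

theorem mc91_complete : ∀ n : ℤ, n ≤ 101 → Mc91 n 91 := by
  intro n hn
  exact mc91_aux _ n rfl hn
end

section
/- Let Mc91p be the inductively defined (least) predicate with constructors: (a) n > 100 → Mc91p(n, r, h, h[r ↦ n-10]); (b) n ≤ 100 → Mc91p(n+11, ms, h, h'') → Mc91p(h'' ms, r, h'', h') → Mc91p(n, r, h, h'). Then Mc91p(n, r, h, h') implies h' r = 91 ∨ (n > 100 ∧ h' r = n - 10). -/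
inductive Mc91p : ℤ → ℤ → (ℤ → ℤ) → (ℤ → ℤ) → Prop
  | base {n r : ℤ} {h : ℤ → ℤ} :
      n > 100 → Mc91p n r h (Function.update h r (n - 10))
  | call {n r ms : ℤ} {h h' h'' : ℤ → ℤ} :
      n ≤ 100 → Mc91p (n + 11) ms h h'' → Mc91p (h'' ms) r h'' h' →
      Mc91p n r h h'

theorem mc91p_sound {n r : ℤ} {h h' : ℤ → ℤ} (hp : Mc91p n r h h') :
    h' r = 91 ∨ (n > 100 ∧ h' r = n - 10) := by
  induction hp with
  | base hn => right; exact ⟨hn, Function.update_self _ _ _⟩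
  | call hle h1 h2 ih1 ih2 =>
    rcases ih2 with h91 | ⟨hgt, heq⟩
    · exact Or.inl h91
    · rcases ih1 with hms | ⟨_, hms⟩ <;> omega
end
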